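/- With A = (a_1,…,a_n) spanning ℤ^m, lying on an affine hyperplane, and B = (b_1,…,b_n) ⊆ ℤ^d a Gale dual (d = n − m), let D_B ⊆ (ℂˣ)^d be the reduced discriminant and ℋ^c_B = λ_B(ℂ^d) ∩ (ℂˣ)^n. Then the closed coamoeba of D_B is the image of the closed coamoeba of ℋ^c_B under the induced torus homomorphism: cl(Arg(D_B)) = φ_{B,𝕋}(cl(Arg(ℋ^c_B))), and the phase limit set satisfies 𝒫∞(D_B) ⊆ φ_{B,𝕋}(𝒫∞(ℋ^c_B)). (Corollary 3.4, remaining parts.) -/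

import Mathlib

open Filter Topology

/-- `Arg`, the coordinatewise argument (on any index type). -/
noncomputable def ArgMap {ι : Type*} (z : ι → ℂ) : ι → ℂ :=
  fun i => z i / ((‖z i‖ : ℝ) : ℂ)

/-- `Log`, the coordinatewise logarithm of absolute value. -/
noncomputable def LogMap {n : ℕ} (z : Fin n → ℂ) : Fin n → ℝ :=
  fun i => Real.log ‖z i‖

/-- The phase limit set `𝒫∞(X)` of `X ⊆ (ℂˣ)^n`. -/
noncomputable def phaseLimit {n : ℕ} (X : Set (Fin n → ℂ)) : Set (Fin n → ℂ) :=
  {θ | ∃ x : ℕ → Fin n → ℂ, (∀ k, x k ∈ X) ∧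
    Tendsto (fun k => ‖LogMap (x k)‖) atTop atTop ∧
    Tendsto (fun k => ArgMap (x k)) atTop (𝓝 θ)}

/-- `λ_B : ℂ^d → ℂ^n`, `y ↦ (⟨b_j, y⟩)_j`. -/
noncomputable def lamB {d n : ℕ} (b : Fin n → Fin d → ℤ) (y : Fin d → ℂ) : Fin n → ℂ :=
  fun j => ∑ k, (b j k : ℂ) * y k

/-- The monomial map `φ_B : (ℂˣ)^n → (ℂˣ)^d`; on the compact torus it is `φ_{B,𝕋}`. -/
noncomputable def phiB {d n : ℕ} (b : Fin n → Fin d → ℤ) (z : Fin n → ℂ) : Fin d → ℂ :=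
  fun k => ∏ j, z j ^ (b j k)

/-- The Horn–Kapranov map `ψ = φ_B ∘ λ_B`. -/
noncomputable def psiHK {d n : ℕ} (b : Fin n → Fin d → ℤ) (y : Fin d → ℂ) : Fin d → ℂ :=
  phiB b (lamB b y)

lemma phiB_ne {d n : ℕ} (b : Fin n → Fin d → ℤ) {z : Fin n → ℂ} (hz : ∀ j, z j ≠ 0) (k : Fin d) :
    phiB b z k ≠ 0 :=
  Finset.prod_ne_zero_iff.2 fun j _ => zpow_ne_zero _ (hz j)

lemma abs_argMap {ι : Type*} {z : ι → ℂ} {i : ι} (h : z i ≠ 0) :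
    ‖ArgMap z i‖ = 1 := by
  simp [ArgMap, h]

lemma argMap_phiB {d n : ℕ} (b : Fin n → Fin d → ℤ) {z : Fin n → ℂ} (hz : ∀ j, z j ≠ 0) :
    ArgMap (phiB b z) = phiB b (ArgMap z) := by
  funext k
  simp only [ArgMap, phiB]
  rw [norm_prod]
  push_cast [norm_zpow]
  rw [← Finset.prod_div_distrib]
  exact Finset.prod_congr rfl fun j _ => (div_zpow _ _ _).symm

lemma logMap_phiB {d n : ℕ} (b : Fin n → Fin d → ℤ) {z : Fin n → ℂ} (hz : ∀ j, z j ≠ 0)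
    (k : Fin d) : LogMap (phiB b z) k = ∑ j, (b j k : ℝ) * LogMap z j := by
  simp only [LogMap, phiB]
  rw [norm_prod, Real.log_prod (fun j _ => by
    simp [norm_zpow]; exact zpow_ne_zero _ (by simpa using norm_ne_zero_iff.2 (hz j)))]
  exact Finset.sum_congr rfl fun j _ => by rw [norm_zpow, Real.log_zpow]

lemma continuousAt_argMap {n : ℕ} {z : Fin n → ℂ} (hz : ∀ i, z i ≠ 0) :
    ContinuousAt (ArgMap (ι := Fin n)) z := by
  rw [continuousAt_pi]
  intro i
  exact ((continuous_apply i).continuousAt).div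
    ((Complex.continuous_ofReal.comp
      (continuous_norm.comp (continuous_apply i))).continuousAt)
    (by simpa using norm_ne_zero_iff.2 (hz i))

lemma continuousAt_logMap {n : ℕ} {z : Fin n → ℂ} (hz : ∀ i, z i ≠ 0) :
    ContinuousAt (LogMap (n := n)) z := by
  rw [continuousAt_pi]
  intro i
  exact (Real.continuousAt_log (by simpa using norm_ne_zero_iff.2 (hz i))).comp
    ((continuous_norm.comp (continuous_apply i)).continuousAt)

lemma continuousAt_phiB {d n : ℕ} (b : Fin n → Fin d → ℤ) {z : Fin n → ℂ} (hz : ∀ j, z j ≠ 0) :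
    ContinuousAt (phiB b) z := by
  rw [continuousAt_pi]
  intro k
  have h : ∀ j : Fin n, ContinuousAt (fun w : Fin n → ℂ => w j ^ (b j k)) z := fun j =>
    ((continuous_apply j).continuousAt).zpow₀ (b j k) (Or.inl (hz j))
  exact tendsto_finset_prod _ fun j _ => h j

def torus (n : ℕ) : Set (Fin n → ℂ) := {θ | ∀ i, ‖θ i‖ = 1}

lemma isClosed_torus (n : ℕ) : IsClosed (torus n) := by
  have : torus n = ⋂ i, {θ : Fin n → ℂ | ‖θ i‖ = 1} := by
    ext θ; simp [torus]
  rw [this]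
  exact isClosed_iInter fun i =>
    isClosed_eq (continuous_norm.comp (continuous_apply i)) continuous_const

lemma isCompact_torus (n : ℕ) : IsCompact (torus n) := by
  refine (isCompact_closedBall (0 : Fin n → ℂ) 1).of_isClosed_subset (isClosed_torus n) ?_
  intro θ hθ
  rw [Metric.mem_closedBall, dist_zero_right]
  refine (pi_norm_le_iff_of_nonneg zero_le_one).2 fun i => ?_
  simp [hθ i]

lemma torus_ne {n : ℕ} {θ : Fin n → ℂ} (hθ : θ ∈ torus n) (i : Fin n) : θ i ≠ 0 := by
  intro h
  have := hθ i
  rw [h] at this; simp at this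

lemma norm_logMap_phiB_le {d n : ℕ} (b : Fin n → Fin d → ℤ) {z : Fin n → ℂ}
    (hz : ∀ j, z j ≠ 0) :
    ‖LogMap (phiB b z)‖ ≤ ((∑ k : Fin d, ∑ j : Fin n, |(b j k : ℝ)|) + 1) * ‖LogMap z‖ := by
  set C := (∑ k : Fin d, ∑ j : Fin n, |(b j k : ℝ)|) + 1 with hCdef
  have hC0 : (0:ℝ) ≤ C * ‖LogMap z‖ := by positivity
  refine (pi_norm_le_iff_of_nonneg hC0).2 fun k => ?_
  rw [logMap_phiB b hz k]
  calc ‖∑ j, (b j k : ℝ) * LogMap z j‖ ≤ ∑ j, ‖(b j k : ℝ) * LogMap z j‖ :=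
        norm_sum_le _ _
    _ ≤ ∑ j, |(b j k : ℝ)| * ‖LogMap z‖ := by
        refine Finset.sum_le_sum fun j _ => ?_
        rw [norm_mul, Real.norm_eq_abs]
        gcongr
        exact norm_le_pi_norm (LogMap z) j
    _ = (∑ j, |(b j k : ℝ)|) * ‖LogMap z‖ := by rw [Finset.sum_mul]
    _ ≤ C * ‖LogMap z‖ := by
        gcongr
        rw [hCdef]
        have h1 : (∑ j, |(b j k : ℝ)|) ≤ ∑ k' : Fin d, ∑ j : Fin n, |(b j k' : ℝ)| :=
          Finset.single_le_sum (f := fun k' => ∑ j : Fin n, |(b j k' : ℝ)|)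
            (fun k' _ => Finset.sum_nonneg fun j _ => abs_nonneg _) (Finset.mem_univ k)
        linarith

/-- **Corollary 3.4, remaining parts.** With `A` spanning `ℤ^m`, lying on
an affine hyperplane, and `B` a Gale dual, let `D_B` be the reduced discriminant (closure
in `(ℂˣ)^d` of the Horn–Kapranov image) and `ℋ^c_B = λ_B(ℂ^d) ∩ (ℂˣ)^n`.  Then
`cl(Arg(D_B)) = φ_{B,𝕋}(cl(Arg(ℋ^c_B)))` and `𝒫∞(D_B) ⊆ φ_{B,𝕋}(𝒫∞(ℋ^c_B))`. -/
theorem stmt13 {m d n : ℕ} (hn : n = m + d)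
    (a : Fin n → Fin m → ℤ)
    (hspan : Submodule.span ℤ (Set.range a) = ⊤)
    (u : Fin m → ℤ) (hu : ∀ j, ∑ i, u i * a j i = 1)
    (b : Fin n → Fin d → ℤ)
    (hinj : Function.Injective (lamB b))
    (hker : Set.range (lamB b) = {c : Fin n → ℂ | ∀ i, ∑ j, c j * (a j i : ℂ) = 0})
    (DB : Set (Fin d → ℂ))
    (hDB : DB = closure (psiHK b '' {y : Fin d → ℂ | ∀ j, lamB b y j ≠ 0}) ∩
      {w | ∀ k, w k ≠ 0})
    (HcB : Set (Fin n → ℂ))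
    (hHcB : HcB = {z : Fin n → ℂ | ∃ y : Fin d → ℂ, (∀ j, lamB b y j ≠ 0) ∧ z = lamB b y}) :
    closure (ArgMap '' DB) = phiB b '' closure (ArgMap '' HcB) ∧
    phaseLimit DB ⊆ phiB b '' phaseLimit HcB := by
  classical
  subst hDB hHcB
  set Y : Set (Fin d → ℂ) := {y : Fin d → ℂ | ∀ j, lamB b y j ≠ 0} with hYdef
  set S : Set (Fin d → ℂ) := psiHK b '' Y with hSdef
  set H : Set (Fin n → ℂ) :=
    {z : Fin n → ℂ | ∃ y : Fin d → ℂ, (∀ j, lamB b y j ≠ 0) ∧ z = lamB b y} with hHdef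
  -- basic facts
  have hHne : ∀ z ∈ H, ∀ j, z j ≠ 0 := by
    rintro z ⟨y, hy, rfl⟩ j; exact hy j
  have hArgH_tor : ArgMap '' H ⊆ torus n := by
    rintro _ ⟨z, hz, rfl⟩ i; exact abs_argMap (hHne z hz i)
  set K : Set (Fin n → ℂ) := closure (ArgMap '' H) with hKdef
  have hKtor : K ⊆ torus n := closure_minimal hArgH_tor (isClosed_torus n)
  have hKcomp : IsCompact K := (isCompact_torus n).of_isClosed_subset isClosed_closure hKtor
  have hRHScomp : IsCompact (phiB b '' K) :=
    hKcomp.image_of_continuousOn fun θ hθ =>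
      (continuousAt_phiB b (torus_ne (hKtor hθ))).continuousWithinAt
  have hRHSclosed : IsClosed (phiB b '' K) := hRHScomp.isClosed
  -- Arg '' S = phiB '' (Arg '' H)
  have hAS : ArgMap '' S = phiB b '' (ArgMap '' H) := by
    ext w
    constructor
    · rintro ⟨_, ⟨y, hy, rfl⟩, rfl⟩
      exact ⟨ArgMap (lamB b y), ⟨lamB b y, ⟨y, hy, rfl⟩, rfl⟩, (argMap_phiB b hy).symm⟩
    · rintro ⟨_, ⟨_, ⟨y, hy, rfl⟩, rfl⟩, rfl⟩
      exact ⟨psiHK b y, ⟨y, hy, rfl⟩, argMap_phiB b hy⟩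
  have hSsub : S ⊆ closure S ∩ {w : Fin d → ℂ | ∀ k, w k ≠ 0} := by
    rintro _ ⟨y, hy, rfl⟩
    exact ⟨subset_closure ⟨y, hy, rfl⟩, fun k => phiB_ne b hy k⟩
  constructor
  · -- closure (Arg '' DB) = phiB '' K
    apply Set.Subset.antisymm
    · refine closure_minimal ?_ hRHSclosed
      rintro _ ⟨v, ⟨hvcl, hvne⟩, rfl⟩
      have h1 : ArgMap v ∈ closure (ArgMap '' S) :=
        mem_closure_image (continuousAt_argMap hvne) hvcl
      rw [hAS] at h1
      exact closure_minimal (Set.image_mono subset_closure) hRHSclosed h1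
    · rintro _ ⟨η, hηK, rfl⟩
      have hηK' : η ∈ closure (ArgMap '' H) := hηK
      have h1 : phiB b η ∈ closure (phiB b '' (ArgMap '' H)) :=
        mem_closure_image (continuousAt_phiB b (torus_ne (hKtor hηK))) hηK'
      rw [← hAS] at h1
      exact closure_mono (Set.image_mono hSsub) h1
  · -- phase limit
    rintro θ ⟨x, hxDB, hxLog, hxArg⟩
    have hxcl : ∀ k, x k ∈ closure S := fun k => (hxDB k).1
    have hxne : ∀ k i, x k i ≠ 0 := fun k => (hxDB k).2
    have key : ∀ k : ℕ, ∃ w ∈ S, dist (ArgMap w) (ArgMap (x k)) < 1/(k+1) ∧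
        ‖LogMap (x k)‖ - 1 < ‖LogMap w‖ := by
      intro k
      have h1 : ArgMap ⁻¹' (Metric.ball (ArgMap (x k)) (1/(k+1))) ∈ 𝓝 (x k) :=
        (continuousAt_argMap (hxne k)) (Metric.ball_mem_nhds _ (by positivity))
      have h2 : (fun v : Fin d → ℂ => ‖LogMap v‖) ⁻¹' (Set.Ioi (‖LogMap (x k)‖ - 1))
          ∈ 𝓝 (x k) :=
        ((continuous_norm.continuousAt).comp (continuousAt_logMap (hxne k)))
          (isOpen_Ioi.mem_nhds (by simp))
      obtain ⟨v, hv1, hv2⟩ := mem_closure_iff_nhds.mp (hxcl k) _ (Filter.inter_mem h1 h2)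
      exact ⟨v, hv2, hv1.1, hv1.2⟩
    choose w hwS hwA hwL using key
    choose y hyY hyw using hwS
    set z : ℕ → Fin n → ℂ := fun k => lamB b (y k) with hzdef
    have hzne : ∀ k j, z k j ≠ 0 := fun k => hyY k
    have hwz : ∀ k, w k = phiB b (z k) := fun k => (hyw k).symm
    -- (a) Arg (w k) → θ
    have ha : Tendsto (fun k => ArgMap (w k)) atTop (𝓝 θ) := by
      rw [tendsto_iff_dist_tendsto_zero]
      have hb : Tendsto (fun k : ℕ => 1/((k:ℝ)+1) + dist (ArgMap (x k)) θ) atTop (𝓝 0) := by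
        have h1 := tendsto_one_div_add_atTop_nhds_zero_nat (𝕜 := ℝ)
        have h2 := tendsto_iff_dist_tendsto_zero.mp hxArg
        simpa using h1.add h2
      refine squeeze_zero (fun k => dist_nonneg) (fun k => ?_) hb
      calc dist (ArgMap (w k)) θ
          ≤ dist (ArgMap (w k)) (ArgMap (x k)) + dist (ArgMap (x k)) θ := dist_triangle _ _ _
        _ ≤ 1/((k:ℝ)+1) + dist (ArgMap (x k)) θ := add_le_add_left (hwA k).le _
    -- (b) ‖Log (w k)‖ → ∞
    have hbw : Tendsto (fun k => ‖LogMap (w k)‖) atTop atTop := by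
      refine tendsto_atTop_mono (fun k => (hwL k).le) ?_
      simpa [sub_eq_add_neg] using tendsto_atTop_add_const_right atTop (-1 : ℝ) hxLog
    -- (c) ‖Log (z k)‖ → ∞
    set C := (∑ k : Fin d, ∑ j : Fin n, |(b j k : ℝ)|) + 1 with hCdef
    have hC : (0:ℝ) < C := by positivity
    have hcz : Tendsto (fun k => ‖LogMap (z k)‖) atTop atTop := by
      refine tendsto_atTop_mono (fun k => ?_) (hbw.atTop_div_const hC)
      rw [div_le_iff₀ hC]
      have := norm_logMap_phiB_le b (hzne k)
      rw [← hwz k] at this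
      calc ‖LogMap (w k)‖ ≤ C * ‖LogMap (z k)‖ := this
        _ = ‖LogMap (z k)‖ * C := mul_comm _ _
    -- subsequence
    have hmem : ∀ k, ArgMap (z k) ∈ torus n := fun k i => abs_argMap (hzne k i)
    obtain ⟨η, hηtor, φ, hφ, hφtend⟩ := (isCompact_torus n).tendsto_subseq hmem
    have hzH : ∀ k, z k ∈ H := fun k => ⟨y k, hyY k, rfl⟩
    refine ⟨η, ⟨fun i => z (φ i), fun i => hzH _, hcz.comp hφ.tendsto_atTop, hφtend⟩, ?_⟩
    have h1 : Tendsto (fun i => phiB b (ArgMap (z (φ i)))) atTop (𝓝 (phiB b η)) :=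
      (continuousAt_phiB b (torus_ne hηtor)).tendsto.comp hφtend
    have h2 : (fun i => phiB b (ArgMap (z (φ i)))) = fun i => ArgMap (w (φ i)) :=
      funext fun i => by rw [← argMap_phiB b (hzne (φ i)), ← hwz]
    rw [h2] at h1
    exact tendsto_nhds_unique h1 (ha.comp hφ.tendsto_atTop)
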